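/- arXiv:2211.16144 — 3 statements merged into one kernel-verified Lean document; each statement's English description precedes it below -/
import Mathlib

section
/- Fréchet derivative of the mid-point Lagrangian functional: let L : ℝ^d × ℝ^d → ℝ be differentiable, q : {0,…,N} → ℝ^d, and v : {0,…,N} → ℝ^d a variation (v_0 = v_N = 0). Then the function ε ↦ 𝓛(q + ε v) is differentiable at ε = 0 with derivative Σ_{i=1}^{N−1} h·⟨ (1/2)(∂L/∂q(★_{i+½}) + ∂L/∂q(★_{i−½})) − (1/h)(∂L/∂v(★_{i+½}) − ∂L/∂v(★_{i−½})), v_i ⟩. -/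
/-! Each summand of `𝓛(q + εv)` is `L` restricted to an affine line, so the chain rule gives its
derivative as `⟪∂L/∂q, (v_{i+1} + v_i)/2⟫ + ⟪∂L/∂v, (v_{i+1} - v_i)/h⟫`. Splitting this into a
`v_i` part and a `v_{i+1}` part and shifting the index of the latter (a discrete summation by
parts, whose boundary terms vanish because `v_0 = v_N = 0`) collects the coefficient of each
interior `v_i`. -/

open scoped RealInnerProductSpace

/-- Gradient of `L` in its first (position) variable. -/
noncomputable def gradq (d : ℕ)
    (L : EuclideanSpace ℝ (Fin d) × EuclideanSpace ℝ (Fin d) → ℝ)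
    (a b : EuclideanSpace ℝ (Fin d)) : EuclideanSpace ℝ (Fin d) :=
  gradient (fun x => L (x, b)) a

/-- Gradient of `L` in its second (velocity) variable. -/
noncomputable def gradv (d : ℕ)
    (L : EuclideanSpace ℝ (Fin d) × EuclideanSpace ℝ (Fin d) → ℝ)
    (a b : EuclideanSpace ℝ (Fin d)) : EuclideanSpace ℝ (Fin d) :=
  gradient (fun y => L (a, y)) b

theorem sum_range_inner_add_inner_succ_eq_sum_Icc {E : Type*} [NormedAddCommGroup E]
    [InnerProductSpace ℝ E] (A B v : ℕ → E) {N : ℕ} (hv0 : v 0 = 0) (hvN : v N = 0) :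
    ∑ i ∈ Finset.range N, (⟪A i, v i⟫ + ⟪B i, v (i + 1)⟫) =
      ∑ i ∈ Finset.Icc 1 (N - 1), ⟪A i + B (i - 1), v i⟫ := by
  rcases N with _ | M
  · simp
  rw [Finset.sum_add_distrib, Finset.sum_range_succ', Finset.sum_range_succ, hv0, hvN,
    Nat.add_sub_cancel, ← Finset.Ico_add_one_right_eq_Icc, Finset.sum_Ico_eq_sum_range,
    Nat.add_sub_cancel]
  simp only [inner_zero_right, add_zero, add_comm 1, Nat.add_sub_cancel, inner_add_left,
    Finset.sum_add_distrib]

section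
variable {E F : Type*} [NormedAddCommGroup E] [InnerProductSpace ℝ E] [CompleteSpace E]
  [NormedAddCommGroup F] [InnerProductSpace ℝ F] [CompleteSpace F]

theorem fderiv_prod_apply_eq_inner_gradient_add {L : E × F → ℝ} {a : E} {b : F}
    (hL : DifferentiableAt ℝ L (a, b)) (p : E) (w : F) :
    fderiv ℝ L (a, b) (p, w) =
      ⟪gradient (fun x => L (x, b)) a, p⟫ + ⟪gradient (fun y => L (a, y)) b, w⟫ := by
  have hx : HasFDerivAt (fun x => L (x, b)) ((fderiv ℝ L (a, b)).comp (.inl ℝ E F)) a :=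
    hL.hasFDerivAt.comp a (hasFDerivAt_prodMk_left a b)
  have hy : HasFDerivAt (fun y => L (a, y)) ((fderiv ℝ L (a, b)).comp (.inr ℝ E F)) b :=
    hL.hasFDerivAt.comp b (hasFDerivAt_prodMk_right a b)
  rw [gradient, gradient, InnerProductSpace.toDual_symm_apply,
    InnerProductSpace.toDual_symm_apply, hx.fderiv, hy.fderiv, ContinuousLinearMap.comp_apply,
    ContinuousLinearMap.comp_apply, ← map_add]
  simp

theorem hasDerivAt_comp_affine_prod {L : E × F → ℝ} {a : E} {b : F}
    (hL : DifferentiableAt ℝ L (a, b)) (p : E) (w : F) :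
    HasDerivAt (fun ε : ℝ => L (a + ε • p, b + ε • w))
      (⟪gradient (fun x => L (x, b)) a, p⟫ + ⟪gradient (fun y => L (a, y)) b, w⟫) 0 := by
  have hline : HasDerivAt (fun ε : ℝ => (a + ε • p, b + ε • w)) (p, w) 0 := by
    simpa using ((hasDerivAt_id (0 : ℝ)).smul_const (p, w)).const_add (a, b)
  rw [← fderiv_prod_apply_eq_inner_gradient_add hL]
  refine HasFDerivAt.comp_hasDerivAt (x := 0) (l := L) ?_ hline
  simpa using hL.hasFDerivAt

theorem hasDerivAt_midpoint_comp_add_smul {L : E × E → ℝ} (h : ℝ) (x y u w : E)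
    (hL : DifferentiableAt ℝ L ((2 : ℝ)⁻¹ • (y + x), h⁻¹ • (y - x))) :
    HasDerivAt
      (fun ε : ℝ => L ((2 : ℝ)⁻¹ • ((y + ε • w) + (x + ε • u)), h⁻¹ • ((y + ε • w) - (x + ε • u))))
      (⟪(2 : ℝ)⁻¹ • gradient (fun z => L (z, h⁻¹ • (y - x))) ((2 : ℝ)⁻¹ • (y + x))
          - h⁻¹ • gradient (fun z => L ((2 : ℝ)⁻¹ • (y + x), z)) (h⁻¹ • (y - x)), u⟫
        + ⟪(2 : ℝ)⁻¹ • gradient (fun z => L (z, h⁻¹ • (y - x))) ((2 : ℝ)⁻¹ • (y + x))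
          + h⁻¹ • gradient (fun z => L ((2 : ℝ)⁻¹ • (y + x), z)) (h⁻¹ • (y - x)), w⟫) 0 := by
  have hline := hasDerivAt_comp_affine_prod hL ((2 : ℝ)⁻¹ • (w + u)) (h⁻¹ • (w - u))
  refine (hline.congr_of_eventuallyEq (.of_forall fun ε => ?_)).congr_deriv ?_
  · refine congrArg L (Prod.ext ?_ ?_) <;> module
  · simp only [inner_add_left, inner_sub_left, inner_add_right, inner_sub_right,
      real_inner_smul_left, real_inner_smul_right]
    ring

end

theorem frechet_derivative_midpoint_lagrangian_general
    (d N : ℕ) (h : ℝ)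
    (L : EuclideanSpace ℝ (Fin d) × EuclideanSpace ℝ (Fin d) → ℝ)
    (hL : Differentiable ℝ L)
    (q v : ℕ → EuclideanSpace ℝ (Fin d))
    (hv0 : v 0 = 0) (hvN : v N = 0) :
    HasDerivAt
      (fun ε : ℝ => ∑ i ∈ Finset.range N,
        h * L ((2 : ℝ)⁻¹ • ((q (i + 1) + ε • v (i + 1)) + (q i + ε • v i)),
               h⁻¹ • ((q (i + 1) + ε • v (i + 1)) - (q i + ε • v i))))
      (∑ i ∈ Finset.Icc 1 (N - 1),
        h * ⟪(2 : ℝ)⁻¹ •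
              (gradq d L ((2 : ℝ)⁻¹ • (q (i + 1) + q i)) (h⁻¹ • (q (i + 1) - q i))
               + gradq d L ((2 : ℝ)⁻¹ • (q i + q (i - 1))) (h⁻¹ • (q i - q (i - 1))))
            - h⁻¹ •
              (gradv d L ((2 : ℝ)⁻¹ • (q (i + 1) + q i)) (h⁻¹ • (q (i + 1) - q i))
               - gradv d L ((2 : ℝ)⁻¹ • (q i + q (i - 1))) (h⁻¹ • (q i - q (i - 1)))),
            v i⟫)
      0 := by
  have hterm := fun i (_ : i ∈ Finset.range N) =>
    (hasDerivAt_midpoint_comp_add_smul h (q i) (q (i + 1)) (v i) (v (i + 1)) (hL _)).const_mul h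
  refine (HasDerivAt.fun_sum hterm).congr_deriv ?_
  rw [← Finset.mul_sum, sum_range_inner_add_inner_succ_eq_sum_Icc _ _ v hv0 hvN, Finset.mul_sum]
  refine Finset.sum_congr rfl fun i hi => ?_
  obtain ⟨j, rfl⟩ : ∃ j, i = j + 1 := ⟨i - 1, by grind⟩
  simp only [Nat.add_sub_cancel]
  exact congrArg (h * ⟪·, v (j + 1)⟫) (by simp only [gradq, gradv]; module)

/-- Fréchet derivative of the mid-point discrete Lagrangian
functional `𝓛(q) = Σ_{i=0}^{N-1} h·L(★_{i+½})` at `q` in the direction of a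
variation `v` (with `v 0 = v N = 0`). -/
theorem frechet_derivative_midpoint_lagrangian
    (d N : ℕ) (hN : 2 ≤ N) (h : ℝ) (hh : 0 < h)
    (L : EuclideanSpace ℝ (Fin d) × EuclideanSpace ℝ (Fin d) → ℝ)
    (hL : Differentiable ℝ L)
    (q v : ℕ → EuclideanSpace ℝ (Fin d))
    (hv0 : v 0 = 0) (hvN : v N = 0) :
    HasDerivAt
      (fun ε : ℝ => ∑ i ∈ Finset.range N,
        h * L ((2 : ℝ)⁻¹ • ((q (i + 1) + ε • v (i + 1)) + (q i + ε • v i)),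
               h⁻¹ • ((q (i + 1) + ε • v (i + 1)) - (q i + ε • v i))))
      (∑ i ∈ Finset.Icc 1 (N - 1),
        h * ⟪(2 : ℝ)⁻¹ •
              (gradq d L ((2 : ℝ)⁻¹ • (q (i + 1) + q i)) (h⁻¹ • (q (i + 1) - q i))
               + gradq d L ((2 : ℝ)⁻¹ • (q i + q (i - 1))) (h⁻¹ • (q i - q (i - 1))))
            - h⁻¹ •
              (gradv d L ((2 : ℝ)⁻¹ • (q (i + 1) + q i)) (h⁻¹ • (q (i + 1) - q i))
               - gradv d L ((2 : ℝ)⁻¹ • (q i + q (i - 1))) (h⁻¹ • (q i - q (i - 1)))),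
            v i⟫)
      0 :=
  frechet_derivative_midpoint_lagrangian_general d N h L hL q v hv0 hvN
end

section
/- Discrete mid-point Euler–Lagrange equation: let L : ℝ^d × ℝ^d → ℝ be differentiable and q : {0,…,N} → ℝ^d. Then q is a critical point of the mid-point discrete Lagrangian functional 𝓛 (i.e., for every variation v with v_0 = v_N = 0 the map ε ↦ 𝓛(q + ε v) has derivative 0 at ε = 0) if and only if for every i = 1,…,N−1: (1/2)[∂L/∂q(★_{i+½}) + ∂L/∂q(★_{i−½})] = (1/h)[∂L/∂v(★_{i+½}) − ∂L/∂v(★_{i−½})]. -/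
/-!
With the discrete Lagrangian `L_d(x, y) = h L((x + y)/2, (y - x)/h)`, the action is
`∑ L_d(q_i, q_{i+1})`, so by the chain rule its derivative in a direction `v` is
`∑ ⟪D₁L_d(q_i, q_{i+1}), v_i⟫ + ⟪D₂L_d(q_i, q_{i+1}), v_{i+1}⟫`. Shifting the index of the second
sum (the boundary terms vanish since `v_0 = v_N = 0`) collects this into
`∑ ⟪D₂L_d(q_{i-1}, q_i) + D₁L_d(q_i, q_{i+1}), v_i⟫`, and testing with variations supported at a
single interior index shows that it vanishes for all `v` iff every coefficient vanishes. Written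
out, `D₂L_d(q_{i-1}, q_i) + D₁L_d(q_i, q_{i+1}) = 0` is `h` times the mid-point equation.
-/

open scoped RealInnerProductSpace

open Finset

section InnerProductSpace

variable {F : Type*} [NormedAddCommGroup F] [InnerProductSpace ℝ F]

theorem sum_range_inner_add_inner_succ_eq {N : ℕ} (P Q v : ℕ → F) (hv₀ : v 0 = 0)
    (hv : v N = 0) :
    ∑ i ∈ range N, (⟪Q i, v i⟫ + ⟪P i, v (i + 1)⟫) = ∑ i ∈ range N, ⟪P (i - 1) + Q i, v i⟫ := by
  have hshift : ∑ i ∈ range N, ⟪P i, v (i + 1)⟫ = ∑ i ∈ range N, ⟪P (i - 1), v i⟫ := by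
    have e := sum_range_succ' (fun i => ⟪P (i - 1), v i⟫) N
    rw [sum_range_succ] at e
    simpa only [Nat.add_sub_cancel, hv₀, hv, inner_zero_right, add_zero] using e.symm
  simp only [sum_add_distrib, hshift, inner_add_left, add_comm]

theorem forall_sum_range_inner_eq_zero_iff (N : ℕ) (P Q : ℕ → F) :
    (∀ v : ℕ → F, v 0 = 0 → v N = 0 →
        ∑ i ∈ range N, (⟪Q i, v i⟫ + ⟪P i, v (i + 1)⟫) = 0) ↔
      ∀ i, 1 ≤ i → i ≤ N - 1 → P (i - 1) + Q i = 0 := by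
  constructor
  · intro H i hi₁ hiN
    have hv₀ : (Pi.single i (P (i - 1) + Q i) : ℕ → F) 0 = 0 :=
      Pi.single_eq_of_ne (show 0 ≠ i by omega) _
    have hv : (Pi.single i (P (i - 1) + Q i) : ℕ → F) N = 0 :=
      Pi.single_eq_of_ne (show N ≠ i by omega) _
    have hsum := H _ hv₀ hv
    rw [sum_range_inner_add_inner_succ_eq P Q _ hv₀ hv,
      sum_eq_single_of_mem i (mem_range.mpr (by omega))
        fun j _ hj => by rw [Pi.single_eq_of_ne hj, inner_zero_right],
      Pi.single_eq_same] at hsum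
    exact inner_self_eq_zero.mp hsum
  · intro H v hv₀ hv
    rw [sum_range_inner_add_inner_succ_eq P Q v hv₀ hv]
    refine sum_eq_zero fun i hi => ?_
    rcases Nat.eq_zero_or_pos i with rfl | hpos
    · rw [hv₀, inner_zero_right]
    · rw [H i hpos (by have := mem_range.mp hi; omega), inner_zero_left]

end InnerProductSpace

theorem smul_add_add_smul_sub_eq_zero_iff {V : Type*} [AddCommGroup V] [Module ℝ V] {h : ℝ}
    (hh : h ≠ 0) (A₀ A₁ B₀ B₁ : V) :
    ((h / 2) • A₀ + B₀) + ((h / 2) • A₁ - B₁) = 0 ↔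
      (2 : ℝ)⁻¹ • (A₁ + A₀) = h⁻¹ • (B₁ - B₀) := by
  have hfactor : ((h / 2) • A₀ + B₀) + ((h / 2) • A₁ - B₁) =
      h • ((2 : ℝ)⁻¹ • (A₁ + A₀) - h⁻¹ • (B₁ - B₀)) := by
    rw [smul_sub, smul_smul, smul_smul, mul_inv_cancel₀ hh]
    module
  rw [hfactor, smul_eq_zero, sub_eq_zero, or_iff_right hh]

section Gradient

variable {d : ℕ} {L : EuclideanSpace ℝ (Fin d) × EuclideanSpace ℝ (Fin d) → ℝ}

theorem fderiv_apply_eq_inner_gradq_add_inner_gradv {a b : EuclideanSpace ℝ (Fin d)}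
    (hL : DifferentiableAt ℝ L (a, b)) (u w : EuclideanSpace ℝ (Fin d)) :
    fderiv ℝ L (a, b) (u, w) = ⟪gradq d L a b, u⟫ + ⟪gradv d L a b, w⟫ := by
  have hq : ⟪gradq d L a b, u⟫ = fderiv ℝ L (a, b) (u, 0) := by
    have ha : HasFDerivAt (fun x => L (x, b)) _ a :=
      hL.hasFDerivAt.comp a (hasFDerivAt_prodMk_left a b)
    rw [gradq, ha.hasGradientAt.gradient, InnerProductSpace.toDual_symm_apply]
    rfl
  have hv : ⟪gradv d L a b, w⟫ = fderiv ℝ L (a, b) (0, w) := by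
    have hb : HasFDerivAt (fun y => L (a, y)) _ b :=
      hL.hasFDerivAt.comp b (hasFDerivAt_prodMk_right a b)
    rw [gradv, hb.hasGradientAt.gradient, InnerProductSpace.toDual_symm_apply]
    rfl
  rw [hq, hv, ← map_add, Prod.mk_add_mk, add_zero, zero_add]

theorem hasDerivAt_add_smul_prod {a b : EuclideanSpace ℝ (Fin d)}
    (hL : DifferentiableAt ℝ L (a, b)) (u w : EuclideanSpace ℝ (Fin d)) :
    HasDerivAt (fun ε : ℝ => L (a + ε • u, b + ε • w))
      (⟪gradq d L a b, u⟫ + ⟪gradv d L a b, w⟫) 0 := by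
  have hline : ∀ x y : EuclideanSpace ℝ (Fin d), HasDerivAt (fun ε : ℝ => x + ε • y) y 0 :=
    fun x y => by simpa using ((hasDerivAt_id (0 : ℝ)).smul_const y).const_add x
  have hcomp := hL.hasFDerivAt.comp_hasDerivAt_of_eq 0 ((hline a u).prodMk (hline b w))
    (by simp)
  rwa [fderiv_apply_eq_inner_gradq_add_inner_gradv hL] at hcomp

-- The partial derivatives `D₁L_d`, `D₂L_d` of `L_d(x, y) = h L((x + y)/2, (y - x)/h)`.
noncomputable def midpointD₁ (d : ℕ) (L : EuclideanSpace ℝ (Fin d) × EuclideanSpace ℝ (Fin d) → ℝ)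
    (h : ℝ) (x y : EuclideanSpace ℝ (Fin d)) : EuclideanSpace ℝ (Fin d) :=
  (h / 2) • gradq d L ((2 : ℝ)⁻¹ • (y + x)) (h⁻¹ • (y - x))
    - gradv d L ((2 : ℝ)⁻¹ • (y + x)) (h⁻¹ • (y - x))

noncomputable def midpointD₂ (d : ℕ) (L : EuclideanSpace ℝ (Fin d) × EuclideanSpace ℝ (Fin d) → ℝ)
    (h : ℝ) (x y : EuclideanSpace ℝ (Fin d)) : EuclideanSpace ℝ (Fin d) :=
  (h / 2) • gradq d L ((2 : ℝ)⁻¹ • (y + x)) (h⁻¹ • (y - x))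
    + gradv d L ((2 : ℝ)⁻¹ • (y + x)) (h⁻¹ • (y - x))

theorem hasDerivAt_midpoint_lagrangian {h : ℝ} (hh : h ≠ 0) {x y : EuclideanSpace ℝ (Fin d)}
    (hL : DifferentiableAt ℝ L ((2 : ℝ)⁻¹ • (y + x), h⁻¹ • (y - x)))
    (u w : EuclideanSpace ℝ (Fin d)) :
    HasDerivAt
      (fun ε : ℝ => h * L ((2 : ℝ)⁻¹ • ((y + ε • w) + (x + ε • u)),
        h⁻¹ • ((y + ε • w) - (x + ε • u))))
      (⟪midpointD₁ d L h x y, u⟫ + ⟪midpointD₂ d L h x y, w⟫) 0 := by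
  have hfun : (fun ε : ℝ => h * L ((2 : ℝ)⁻¹ • ((y + ε • w) + (x + ε • u)),
        h⁻¹ • ((y + ε • w) - (x + ε • u)))) =
      fun ε : ℝ => h * L ((2 : ℝ)⁻¹ • (y + x) + ε • ((2 : ℝ)⁻¹ • (w + u)),
        h⁻¹ • (y - x) + ε • (h⁻¹ • (w - u))) := by
    funext ε
    congr 2
    ext1 <;> module
  rw [hfun]
  refine ((hasDerivAt_add_smul_prod hL _ _).const_mul h).congr_deriv ?_
  simp only [midpointD₁, midpointD₂, inner_add_left, inner_sub_left, inner_add_right,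
    inner_sub_right, real_inner_smul_left, real_inner_smul_right]
  field_simp
  ring

end Gradient

theorem discrete_midpoint_euler_lagrange_general
    (d N : ℕ) (h : ℝ) (hh : 0 < h)
    (L : EuclideanSpace ℝ (Fin d) × EuclideanSpace ℝ (Fin d) → ℝ)
    (hL : Differentiable ℝ L)
    (q : ℕ → EuclideanSpace ℝ (Fin d)) :
    (∀ v : ℕ → EuclideanSpace ℝ (Fin d), v 0 = 0 → v N = 0 →
      HasDerivAt
        (fun ε : ℝ => ∑ i ∈ Finset.range N,
          h * L ((2 : ℝ)⁻¹ • ((q (i + 1) + ε • v (i + 1)) + (q i + ε • v i)),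
                 h⁻¹ • ((q (i + 1) + ε • v (i + 1)) - (q i + ε • v i))))
        0 0)
    ↔ (∀ i, 1 ≤ i → i ≤ N - 1 →
        (2 : ℝ)⁻¹ •
            (gradq d L ((2 : ℝ)⁻¹ • (q (i + 1) + q i)) (h⁻¹ • (q (i + 1) - q i))
             + gradq d L ((2 : ℝ)⁻¹ • (q i + q (i - 1))) (h⁻¹ • (q i - q (i - 1))))
          = h⁻¹ •
            (gradv d L ((2 : ℝ)⁻¹ • (q (i + 1) + q i)) (h⁻¹ • (q (i + 1) - q i))
             - gradv d L ((2 : ℝ)⁻¹ • (q i + q (i - 1))) (h⁻¹ • (q i - q (i - 1))))) := by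
  have hderiv (v : ℕ → EuclideanSpace ℝ (Fin d)) := HasDerivAt.fun_sum (u := range N) fun i _ =>
    hasDerivAt_midpoint_lagrangian (x := q i) (y := q (i + 1)) hh.ne' (hL _) (v i) (v (i + 1))
  refine (forall₃_congr fun v _ _ => ⟨(hderiv v).unique, fun h0 => h0 ▸ hderiv v⟩).trans ?_
  refine (forall_sum_range_inner_eq_zero_iff N _ _).trans (forall₃_congr fun i hi _ => ?_)
  obtain ⟨j, rfl⟩ := Nat.exists_eq_add_of_le' hi
  simp only [midpointD₁, midpointD₂, Nat.add_sub_cancel]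
  exact smul_add_add_smul_sub_eq_zero_iff hh.ne' _ _ _ _

/-- discrete mid-point Euler–Lagrange equation. `q` is a critical
point of the mid-point discrete Lagrangian functional iff the mid-point
Euler–Lagrange equation holds at all interior indices. -/
theorem discrete_midpoint_euler_lagrange
    (d N : ℕ) (hN : 2 ≤ N) (h : ℝ) (hh : 0 < h)
    (L : EuclideanSpace ℝ (Fin d) × EuclideanSpace ℝ (Fin d) → ℝ)
    (hL : Differentiable ℝ L)
    (q : ℕ → EuclideanSpace ℝ (Fin d)) :
    (∀ v : ℕ → EuclideanSpace ℝ (Fin d), v 0 = 0 → v N = 0 →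
      HasDerivAt
        (fun ε : ℝ => ∑ i ∈ Finset.range N,
          h * L ((2 : ℝ)⁻¹ • ((q (i + 1) + ε • v (i + 1)) + (q i + ε • v i)),
                 h⁻¹ • ((q (i + 1) + ε • v (i + 1)) - (q i + ε • v i))))
        0 0)
    ↔ (∀ i, 1 ≤ i → i ≤ N - 1 →
        (2 : ℝ)⁻¹ •
            (gradq d L ((2 : ℝ)⁻¹ • (q (i + 1) + q i)) (h⁻¹ • (q (i + 1) - q i))
             + gradq d L ((2 : ℝ)⁻¹ • (q i + q (i - 1))) (h⁻¹ • (q i - q (i - 1))))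
          = h⁻¹ •
            (gradv d L ((2 : ℝ)⁻¹ • (q (i + 1) + q i)) (h⁻¹ • (q (i + 1) - q i))
             - gradv d L ((2 : ℝ)⁻¹ • (q i + q (i - 1))) (h⁻¹ • (q i - q (i - 1))))) :=
  discrete_midpoint_euler_lagrange_general d N h hh L hL q
end

section
/- Order-one discrete Euler–Lagrange equation: let L : ℝ^d × ℝ^d → ℝ be differentiable and define the order-one discrete Lagrangian functional 𝓛_h(q) = Σ_{i=0}^{n−1} h·L(q_i, (q_{i+1} − q_i)/h) for q : {0,…,n} → ℝ^d. Then q is a critical point of 𝓛_h (i.e., for every variation w with w_0 = w_n = 0 the map ε ↦ 𝓛_h(q + ε w) has derivative 0 at ε = 0) if and only if for every i = 1,…,n−1: −(1/h)[∂L/∂v(q_i, (q_{i+1} − q_i)/h) − ∂L/∂v(q_{i−1}, (q_i − q_{i−1})/h)] + ∂L/∂q(q_i, (q_{i+1} − q_i)/h) = 0. -/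
open scoped RealInnerProductSpace

/-!
Differentiating `ε ↦ 𝓛_h(q + ε w)` term by term gives the first variation
`Σ h (⟪∂L/∂q, wᵢ⟫ + ⟪∂L/∂v, (wᵢ₊₁ - wᵢ)/h⟫)`. Summation by parts, using `w₀ = wₙ = 0`,
turns it into `h Σ ⟪ELᵢ, wᵢ⟫` with `ELᵢ` the discrete Euler–Lagrange expression, and testing
against the variation concentrated at a single interior index shows that this vanishes for
all `w` exactly when every interior `ELᵢ` does.
-/

open scoped RealInnerProductSpace
open Finset InnerProductSpace

section PartialGradients

variable {E F : Type*} [NormedAddCommGroup E] [InnerProductSpace ℝ E] [CompleteSpace E]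
  [NormedAddCommGroup F] [InnerProductSpace ℝ F] [CompleteSpace F]

theorem hasDerivAt_apply_add_smul_prodMk {L : E × F → ℝ} {a : E} {b : F}
    (hL : DifferentiableAt ℝ L (a, b)) (u : E) (v : F) :
    HasDerivAt (fun ε : ℝ => L (a + ε • u, b + ε • v))
      (⟪gradient (fun x => L (x, b)) a, u⟫ + ⟪gradient (fun y => L (a, y)) b, v⟫) 0 := by
  have hline : HasDerivAt (fun ε : ℝ => (a + ε • u, b + ε • v)) (u, v) 0 := by
    simpa using (((hasDerivAt_id (0 : ℝ)).smul_const u).const_add a).prodMk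
      (((hasDerivAt_id (0 : ℝ)).smul_const v).const_add b)
  have hL' : HasFDerivAt L (fderiv ℝ L (a, b)) (a + (0 : ℝ) • u, b + (0 : ℝ) • v) := by
    simpa using hL.hasFDerivAt
  have hx : fderiv ℝ (fun x => L (x, b)) a = (fderiv ℝ L (a, b)).comp (.inl ℝ E F) :=
    (hL.hasFDerivAt.comp a (hasFDerivAt_prodMk_left a b)).fderiv
  have hy : fderiv ℝ (fun y => L (a, y)) b = (fderiv ℝ L (a, b)).comp (.inr ℝ E F) :=
    (hL.hasFDerivAt.comp b (hasFDerivAt_prodMk_right a b)).fderiv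
  refine (hL'.comp_hasDerivAt 0 hline).congr_deriv ?_
  simp only [gradient, toDual_symm_apply, hx, hy, ContinuousLinearMap.comp_apply, ← map_add,
    ContinuousLinearMap.inl_apply, ContinuousLinearMap.inr_apply, Prod.mk_add_mk, add_zero,
    zero_add]

end PartialGradients

section SummationByParts

variable {V : Type*} [NormedAddCommGroup V] [InnerProductSpace ℝ V]

theorem sum_range_inner_sub_eq_sum_range_inner {B w : ℕ → V} {n : ℕ}
    (hw0 : w 0 = 0) (hwn : w n = 0) :
    ∑ i ∈ range n, ⟪B i, w (i + 1) - w i⟫ = ∑ i ∈ range n, ⟪B (i - 1) - B i, w i⟫ := by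
  have hshift : ∑ i ∈ range n, ⟪B i, w (i + 1)⟫ = ∑ i ∈ range n, ⟪B (i - 1), w i⟫ := by
    have h₁ := sum_range_succ' (fun i => ⟪B (i - 1), w i⟫) n
    have h₂ := sum_range_succ (fun i => ⟪B (i - 1), w i⟫) n
    simp only [hw0, hwn, inner_zero_right, add_zero, Nat.add_sub_cancel] at h₁ h₂
    rw [← h₁, h₂]
  simp only [inner_sub_left, inner_sub_right, sum_sub_distrib, hshift]

theorem forall_sum_range_inner_eq_zero_iff_s11 (n : ℕ) (e : ℕ → V) :
    (∀ w : ℕ → V, w 0 = 0 → w n = 0 → ∑ i ∈ range n, ⟪e i, w i⟫ = 0) ↔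
      ∀ i, 1 ≤ i → i ≤ n - 1 → e i = 0 := by
  constructor
  · intro hw i hi₁ hin
    have hsingle := hw (Pi.single i (e i)) (Pi.single_eq_of_ne (by omega) _)
      (Pi.single_eq_of_ne (by omega) _)
    rwa [sum_eq_single_of_mem i (mem_range.2 (by omega)) fun j _ hji => by
      rw [Pi.single_eq_of_ne hji, inner_zero_right], Pi.single_eq_same,
      inner_self_eq_zero] at hsingle
  · intro he w hw0 _
    refine sum_eq_zero fun i hi => ?_
    rcases Nat.eq_zero_or_pos i with rfl | hi₁
    · rw [hw0, inner_zero_right]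
    · rw [he i hi₁ (by have := mem_range.1 hi; omega), inner_zero_left]

end SummationByParts

section DiscreteLagrangian

variable (d : ℕ) (h : ℝ) (L : EuclideanSpace ℝ (Fin d) × EuclideanSpace ℝ (Fin d) → ℝ)

noncomputable def discreteAction (n : ℕ) (q : ℕ → EuclideanSpace ℝ (Fin d)) : ℝ :=
  ∑ i ∈ range n, h * L (q i, h⁻¹ • (q (i + 1) - q i))

noncomputable def discreteEulerLagrange (q : ℕ → EuclideanSpace ℝ (Fin d)) (i : ℕ) :
    EuclideanSpace ℝ (Fin d) :=
  -(h⁻¹ • (gradv d L (q i) (h⁻¹ • (q (i + 1) - q i))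
      - gradv d L (q (i - 1)) (h⁻¹ • (q i - q (i - 1)))))
    + gradq d L (q i) (h⁻¹ • (q (i + 1) - q i))

variable {d h L}

theorem hasDerivAt_discreteAction_add_smul (hh : h ≠ 0) (hL : Differentiable ℝ L) {n : ℕ}
    (q : ℕ → EuclideanSpace ℝ (Fin d)) {w : ℕ → EuclideanSpace ℝ (Fin d)}
    (hw0 : w 0 = 0) (hwn : w n = 0) :
    HasDerivAt (fun ε : ℝ => discreteAction d h L n (q + ε • w))
      (h * ∑ i ∈ range n, ⟪discreteEulerLagrange d h L q i, w i⟫) 0 := by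
  set Gq := fun i => gradq d L (q i) (h⁻¹ • (q (i + 1) - q i))
  set Gv := fun i => gradv d L (q i) (h⁻¹ • (q (i + 1) - q i))
  have hterm : ∀ i, HasDerivAt
      (fun ε : ℝ => h * L ((q + ε • w) i, h⁻¹ • ((q + ε • w) (i + 1) - (q + ε • w) i)))
      (h * (⟪Gq i, w i⟫ + ⟪Gv i, h⁻¹ • (w (i + 1) - w i)⟫)) 0 := by
    intro i
    have harg : ∀ ε : ℝ, h⁻¹ • ((q + ε • w) (i + 1) - (q + ε • w) i)
        = h⁻¹ • (q (i + 1) - q i) + ε • (h⁻¹ • (w (i + 1) - w i)) := fun ε => by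
      simp only [Pi.add_apply, Pi.smul_apply]
      module
    simp only [harg]
    exact (hasDerivAt_apply_add_smul_prodMk (hL _) _ _).const_mul h
  refine (HasDerivAt.fun_sum fun i _ => hterm i).congr_deriv ?_
  calc ∑ i ∈ range n, h * (⟪Gq i, w i⟫ + ⟪Gv i, h⁻¹ • (w (i + 1) - w i)⟫)
      = ∑ i ∈ range n, (h * ⟪Gq i, w i⟫ + ⟪Gv (i - 1) - Gv i, w i⟫) := by
        rw [sum_add_distrib, ← sum_range_inner_sub_eq_sum_range_inner hw0 hwn,
          ← sum_add_distrib]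
        refine sum_congr rfl fun i _ => ?_
        rw [real_inner_smul_right]
        field_simp
    _ = h * ∑ i ∈ range n, ⟪discreteEulerLagrange d h L q i, w i⟫ := by
        rw [mul_sum]
        refine sum_congr rfl fun i _ => ?_
        -- `w 0 = 0` absorbs the junk value of the truncated `0 - 1` at the left endpoint
        rcases i with _ | i
        · simp only [hw0, inner_zero_right, mul_zero, add_zero]
        · simp only [discreteEulerLagrange, Gq, Gv, add_tsub_cancel_right, inner_add_left,
            inner_neg_left, real_inner_smul_left, inner_sub_left]
          field_simp
          ring

end DiscreteLagrangian

theorem discrete_order_one_euler_lagrange_general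
    (d n : ℕ) (h : ℝ) (hh : 0 < h)
    (L : EuclideanSpace ℝ (Fin d) × EuclideanSpace ℝ (Fin d) → ℝ)
    (hL : Differentiable ℝ L)
    (q : ℕ → EuclideanSpace ℝ (Fin d)) :
    (∀ w : ℕ → EuclideanSpace ℝ (Fin d), w 0 = 0 → w n = 0 →
      HasDerivAt
        (fun ε : ℝ => ∑ i ∈ Finset.range n,
          h * L (q i + ε • w i,
                 h⁻¹ • ((q (i + 1) + ε • w (i + 1)) - (q i + ε • w i))))
        0 0)
    ↔ (∀ i, 1 ≤ i → i ≤ n - 1 →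
        -(h⁻¹ • (gradv d L (q i) (h⁻¹ • (q (i + 1) - q i))
                 - gradv d L (q (i - 1)) (h⁻¹ • (q i - q (i - 1)))))
          + gradq d L (q i) (h⁻¹ • (q (i + 1) - q i)) = 0) := by
  have hcritical_iff : ∀ w : ℕ → EuclideanSpace ℝ (Fin d), w 0 = 0 → w n = 0 →
      (HasDerivAt (fun ε : ℝ => discreteAction d h L n (q + ε • w)) 0 0 ↔
        ∑ i ∈ range n, ⟪discreteEulerLagrange d h L q i, w i⟫ = 0) := by
    intro w hw0 hwn
    have hvar := hasDerivAt_discreteAction_add_smul hh.ne' hL q hw0 hwn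
    rw [← mul_eq_zero_iff_left hh.ne']
    exact ⟨hvar.unique, fun hzero => hzero ▸ hvar⟩
  exact (forall_congr' fun w => forall_congr' fun hw0 => forall_congr' fun hwn =>
    hcritical_iff w hw0 hwn).trans (forall_sum_range_inner_eq_zero_iff_s11 n _)

/-- order-one discrete Euler–Lagrange equation.  `q` is a
critical point of `𝓛_h(q) = Σ_{i=0}^{n−1} h·L(qᵢ, (qᵢ₊₁ − qᵢ)/h)` iff the
order-one discrete Euler–Lagrange equation holds at all interior indices. -/
theorem discrete_order_one_euler_lagrange
    (d n : ℕ) (hn : 2 ≤ n) (h : ℝ) (hh : 0 < h)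
    (L : EuclideanSpace ℝ (Fin d) × EuclideanSpace ℝ (Fin d) → ℝ)
    (hL : Differentiable ℝ L)
    (q : ℕ → EuclideanSpace ℝ (Fin d)) :
    (∀ w : ℕ → EuclideanSpace ℝ (Fin d), w 0 = 0 → w n = 0 →
      HasDerivAt
        (fun ε : ℝ => ∑ i ∈ Finset.range n,
          h * L (q i + ε • w i,
                 h⁻¹ • ((q (i + 1) + ε • w (i + 1)) - (q i + ε • w i))))
        0 0)
    ↔ (∀ i, 1 ≤ i → i ≤ n - 1 →
        -(h⁻¹ • (gradv d L (q i) (h⁻¹ • (q (i + 1) - q i))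
                 - gradv d L (q (i - 1)) (h⁻¹ • (q i - q (i - 1)))))
          + gradq d L (q i) (h⁻¹ • (q (i + 1) - q i)) = 0) :=
  discrete_order_one_euler_lagrange_general d n h hh L hL q
end
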